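/- Let d ≥ 3 and suppose that for every Borel probability measure μ on ℝ^d there exists a line ℓ ⊂ ℝ^d with depth_μ(ℓ) ≥ 1/d + 1/(3d³). Then for every d, every k with 1 ≤ k ≤ d − 2, and every Borel probability measure μ on ℝ^d, there exists a k-flat α ⊂ ℝ^d with depth_μ(α) ≥ 1/(d−k+1) + 1/(3(d−k+1)³). -/

import Mathlib

/-! Pull back along a surjective linear map `L : ℝ^d → ℝ^(d-k+1)`: the preimage of a line is a
`k`-flat. A linear functional bounded above on a preimage `L⁻¹ S` vanishes on `ker L`, so its
normal vector is `L† w` for some `w ≠ 0`; hence the closed half-spaces containing `L⁻¹ S` are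
exactly the preimages of those containing `S`, with the same mass under `μ` and `L_* μ`, and
the depth of a deep line for `L_* μ` transfers to its preimage. -/

open MeasureTheory

/-- The half-space depth of a set (e.g. a flat) `α`: the infimum of the measures of
closed half-spaces containing `α`. -/
noncomputable def depthFlat (m : ℕ) (μ : Measure (EuclideanSpace ℝ (Fin m)))
    (α : Set (EuclideanSpace ℝ (Fin m))) : ℝ :=
  sInf {r : ℝ | ∃ (v : EuclideanSpace ℝ (Fin m)) (c : ℝ), v ≠ 0 ∧
    (∀ x ∈ α, (inner ℝ v x : ℝ) ≤ c) ∧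
    r = (μ {y : EuclideanSpace ℝ (Fin m) | (inner ℝ v y : ℝ) ≤ c}).toReal}

open Module

lemma eq_zero_of_forall_add_mul_le {a b c : ℝ} (h : ∀ t : ℝ, a + t * b ≤ c) : b = 0 := by
  by_contra hb
  have := h ((c - a + 1) / b)
  rw [div_mul_cancel₀ _ hb] at this
  linarith

namespace AffineSubspace

variable {k V₁ P₁ V₂ P₂ : Type*} [Ring k] [AddCommGroup V₁] [Module k V₁] [AddTorsor V₁ P₁]
  [AddCommGroup V₂] [Module k V₂] [AddTorsor V₂ P₂]

theorem direction_comap {f : P₁ →ᵃ[k] P₂} {s : AffineSubspace k P₂} {p : P₁}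
    (hp : p ∈ s.comap f) : (s.comap f).direction = s.direction.comap f.linear := by
  ext v
  rw [Submodule.mem_comap, ← vadd_mem_iff_mem_direction v hp, mem_comap, f.map_vadd,
    vadd_mem_iff_mem_direction _ (mem_comap.mp hp)]

end AffineSubspace

theorem Submodule.finrank_comap_of_surjective {K V W : Type*} [DivisionRing K] [AddCommGroup V]
    [Module K V] [FiniteDimensional K V] [AddCommGroup W] [Module K W] {f : V →ₗ[K] W}
    (hf : Function.Surjective f) (p : Submodule K W) :
    finrank K (p.comap f) = finrank K p + finrank K (LinearMap.ker f) := by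
  have hmaps : ∀ x ∈ p.comap f, f x ∈ p := fun _ hx ↦ hx
  have hrange : LinearMap.range (f.restrict hmaps) = ⊤ := by
    refine LinearMap.range_eq_top.mpr fun ⟨y, hy⟩ ↦ ?_
    obtain ⟨x, rfl⟩ := hf y
    exact ⟨⟨x, hy⟩, rfl⟩
  have hker : LinearMap.ker (f.restrict hmaps) = (LinearMap.ker f).comap (p.comap f).subtype :=
    LinearMap.ker_restrict hmaps
  have := (f.restrict hmaps).finrank_range_add_finrank_ker
  rw [hrange, finrank_top, hker,
    (Submodule.comapSubtypeEquivOfLe (LinearMap.ker_le_comap f)).finrank_eq] at this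
  exact this.symm

section InnerProduct

variable {E F : Type*} [NormedAddCommGroup E] [InnerProductSpace ℝ E]
  [NormedAddCommGroup F] [InnerProductSpace ℝ F]

theorem Submodule.mem_orthogonal_of_forall_inner_add_le {K : Submodule ℝ E} {v x : E} {c : ℝ}
    (h : ∀ u ∈ K, inner ℝ v (x + u) ≤ c) : v ∈ Kᗮ := by
  refine (K.mem_orthogonal' v).mpr fun u hu ↦
    eq_zero_of_forall_add_mul_le (a := inner ℝ v x) (c := c) fun t ↦ ?_
  simpa [inner_add_right, inner_smul_right] using h (t • u) (K.smul_mem t hu)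

variable [FiniteDimensional ℝ E] [FiniteDimensional ℝ F]

theorem LinearMap.injective_adjoint_of_surjective {L : E →ₗ[ℝ] F}
    (hL : Function.Surjective L) : Function.Injective L.adjoint := by
  rw [← LinearMap.ker_eq_bot, ← L.orthogonal_range, LinearMap.range_eq_top.mpr hL,
    Submodule.top_orthogonal_eq_bot]

theorem LinearMap.mem_range_adjoint_of_forall_inner_le {L : E →ₗ[ℝ] F} {S : Set F}
    (hS : (L ⁻¹' S).Nonempty) {v : E} {c : ℝ} (h : ∀ x ∈ L ⁻¹' S, inner ℝ v x ≤ c) :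
    v ∈ LinearMap.range L.adjoint := by
  obtain ⟨x, hx⟩ := hS
  rw [← L.orthogonal_ker]
  refine Submodule.mem_orthogonal_of_forall_inner_add_le (x := x) (c := c) fun u hu ↦ h _ ?_
  simpa [Set.mem_preimage, LinearMap.mem_ker.mp hu] using hx

end InnerProduct

theorem depthFlat_preimage {d m : ℕ} (μ : Measure (EuclideanSpace ℝ (Fin d)))
    {L : EuclideanSpace ℝ (Fin d) →ₗ[ℝ] EuclideanSpace ℝ (Fin m)} (hL : Function.Surjective L)
    {S : Set (EuclideanSpace ℝ (Fin m))} (hS : S.Nonempty) :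
    depthFlat d μ (L ⁻¹' S) = depthFlat m (μ.map L) S := by
  have hmap : ∀ w c, (μ.map L {y | inner ℝ w y ≤ c}) = μ {x | inner ℝ (L.adjoint w) x ≤ c} :=
    fun w c ↦ by
      rw [Measure.map_apply L.continuous_of_finiteDimensional.measurable
        (measurableSet_le (by fun_prop) measurable_const)]
      simp only [Set.preimage_ofPred_eq, LinearMap.adjoint_inner_left]
  have hbound : ∀ w c, (∀ x ∈ L ⁻¹' S, inner ℝ (L.adjoint w) x ≤ c) ↔ ∀ z ∈ S, inner ℝ w z ≤ c :=
    fun w c ↦ by simp only [Set.mem_preimage, LinearMap.adjoint_inner_left, hL.forall]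
  unfold depthFlat
  congr 1
  ext r
  constructor
  · rintro ⟨v, c, hv, hvS, rfl⟩
    obtain ⟨w, rfl⟩ := L.mem_range_adjoint_of_forall_inner_le (hS.preimage hL) hvS
    exact ⟨w, c, by rintro rfl; simp at hv, (hbound w c).mp hvS, by rw [hmap]⟩
  · rintro ⟨w, c, hw, hwS, rfl⟩
    exact ⟨L.adjoint w, c, (map_ne_zero_iff _ (L.injective_adjoint_of_surjective hL)).mpr hw,
      (hbound w c).mpr hwS, by rw [hmap]⟩

theorem exists_surjective_euclideanSpace {d m : ℕ} (h : m ≤ d) :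
    ∃ L : EuclideanSpace ℝ (Fin d) →ₗ[ℝ] EuclideanSpace ℝ (Fin m), Function.Surjective L :=
  ⟨(WithLp.linearEquiv 2 ℝ (Fin m → ℝ)).symm.toLinearMap ∘ₗ
      LinearMap.funLeft ℝ ℝ (Fin.castLE h) ∘ₗ (WithLp.linearEquiv 2 ℝ (Fin d → ℝ)).toLinearMap,
    (WithLp.linearEquiv 2 ℝ _).symm.surjective.comp <|
      (LinearMap.funLeft_surjective_of_injective (R := ℝ) (M := ℝ) _ (Fin.castLE_injective h)).comp
      (WithLp.linearEquiv 2 ℝ _).surjective⟩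

theorem stmt13
    (H : ∀ m : ℕ, 3 ≤ m → ∀ μ : Measure (EuclideanSpace ℝ (Fin m)), IsProbabilityMeasure μ →
      ∃ ℓ : AffineSubspace ℝ (EuclideanSpace ℝ (Fin m)),
        (ℓ : Set (EuclideanSpace ℝ (Fin m))).Nonempty ∧
        Module.finrank ℝ ℓ.direction = 1 ∧
        depthFlat m μ ℓ ≥ 1 / m + 1 / (3 * (m : ℝ) ^ 3)) :
    ∀ d k : ℕ, 1 ≤ k → k + 2 ≤ d →
      ∀ μ : Measure (EuclideanSpace ℝ (Fin d)), IsProbabilityMeasure μ →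
        ∃ α : AffineSubspace ℝ (EuclideanSpace ℝ (Fin d)),
          (α : Set (EuclideanSpace ℝ (Fin d))).Nonempty ∧
          Module.finrank ℝ α.direction = k ∧
          depthFlat d μ α ≥ 1 / (d - k + 1 : ℕ) + 1 / (3 * ((d - k + 1 : ℕ) : ℝ) ^ 3) := by
  intro d k hk hkd μ hμ
  obtain ⟨L, hL⟩ := exists_surjective_euclideanSpace (d := d) (m := d - k + 1) (by omega)
  have hker : finrank ℝ (LinearMap.ker L) = k - 1 := by
    have := L.finrank_range_add_finrank_ker
    rw [LinearMap.range_eq_top.mpr hL, finrank_top, finrank_euclideanSpace_fin,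
      finrank_euclideanSpace_fin] at this
    omega
  obtain ⟨ℓ, ⟨p, hp⟩, hℓ, hdepth⟩ := H _ (by omega) (μ.map L)
    (Measure.isProbabilityMeasure_map L.continuous_of_finiteDimensional.aemeasurable)
  obtain ⟨x, rfl⟩ := hL p
  have hx : x ∈ ℓ.comap L.toAffineMap := hp
  refine ⟨ℓ.comap L.toAffineMap, ⟨x, hx⟩, ?_, ?_⟩
  · rw [AffineSubspace.direction_comap hx, L.toAffineMap_linear,
      Submodule.finrank_comap_of_surjective hL, hℓ, hker]
    omega
  · rw [AffineSubspace.coe_comap, L.coe_toAffineMap, depthFlat_preimage μ hL ⟨_, hp⟩]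
    exact hdepth
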